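/- Let (G,i) be a rooted graph on a finite vertex set V with at least 2 vertices, let k ≥ 0, and suppose A ∈ S(G) has i-SNIP with null(A) = k and null(A(i)) = k+1. Then there exists a vertex j adjacent to i in G and a matrix A' ∈ S(G') with i-SNIP satisfying null(A') = k and null(A'(i)) = k+1, where G' is the spanning subgraph of G obtained from G by deleting all edges incident to i except the edge {i,j}. In particular, if i is not a leaf of G, then (G,i) has a proper rooted subgraph allowing the nullity pair (k,k+1) with i-SNIP. -/

import Mathlib

/-!
Write `B = A(i)`. Since `null B > null A`, some kernel vector `z` of `B`, padded by a zero at `i`,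
is not in the kernel of `A`, i.e. row `i` of `A` pairs nontrivially with `z`; pick `j` with
`A i j ≠ 0` and `z j ≠ 0`. Deleting the other edges at `i` does not change `B`, and `z` still
pairs nontrivially with the new row `i`. Whenever a symmetric `M` has such a padded kernel vector
`z` of `M(i)` with `(M z) i ≠ 0`, pairing `z` with `M y` shows that `(M y) v = 0` for all `v ≠ i`
forces `y i = 0`. Hence `null M = null M(i) - 1`, and row and column `i` vanish in any matrix `X`
witnessing a failure of `i`-SNIP for the pruned matrix, so that `X` would witness one for `A`.
-/

open Matrix

variable {V : Type*} [Fintype V] [DecidableEq V]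

/-- The nullity of a real matrix: the dimension of its kernel. -/
noncomputable def nullity (A : Matrix V V ℝ) : ℕ :=
  Module.finrank ℝ (LinearMap.ker A.mulVecLin)

/-- `delRC A i` is the principal submatrix of `A` obtained by deleting row and column `i`. -/
def delRC (A : Matrix V V ℝ) (i : V) : Matrix {j // j ≠ i} {j // j ≠ i} ℝ :=
  A.submatrix Subtype.val Subtype.val

/-- `A ∈ S(G)`: `A` is symmetric and its off-diagonal entries are nonzero precisely at edges. -/
def InS (G : SimpleGraph V) (A : Matrix V V ℝ) : Prop :=
  A.IsSymm ∧ ∀ j k : V, j ≠ k → (A j k ≠ 0 ↔ G.Adj j k)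

/-- The i-strong nullity interlacing property. -/
def HasSNIP (A : Matrix V V ℝ) (i : V) : Prop :=
  ∀ X : Matrix V V ℝ, X.IsSymm → (∀ j k, A j k * X j k = 0) → (∀ j, X j j = 0) →
    (∀ j k, j ≠ i → (A * X) j k = 0) → X = 0

/-- The Strong Arnold Property. -/
def HasSAP (A : Matrix V V ℝ) : Prop :=
  ∀ X : Matrix V V ℝ, X.IsSymm → (∀ j k, A j k * X j k = 0) → (∀ j, X j j = 0) →
    A * X = 0 → X = 0

/-- The parameter ξξ(G,i): the maximum of k+ℓ over pairs k ≤ ℓ such that (G,i)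
allows the nullity pair (k,ℓ) with i-SNIP. -/
noncomputable def xixi (G : SimpleGraph V) (i : V) : ℕ :=
  sSup {s | ∃ k ℓ : ℕ, k ≤ ℓ ∧ s = k + ℓ ∧ ∃ A : Matrix V V ℝ,
    InS G A ∧ HasSNIP A i ∧ nullity A = k ∧ nullity (delRC A i) = ℓ}

/-- The spanning subgraph of `G` obtained by deleting all edges incident to `i`
except the edge `{i, j}`. -/
def pruneAt (G : SimpleGraph V) (i j : V) : SimpleGraph V where
  Adj x y := G.Adj x y ∧ (x = i → y = j) ∧ (y = i → x = j)
  symm := by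
    constructor
    intro x y h
    exact ⟨h.1.symm, h.2.2, h.2.1⟩
  loopless := by
    constructor
    intro x h
    exact G.ne_of_adj h.1 rfl

set_option linter.unusedSectionVars false

section PaddedKernel

noncomputable def extendByZero (i : V) : ({j : V // j ≠ i} → ℝ) →ₗ[ℝ] (V → ℝ) where
  toFun x v := if h : v = i then 0 else x ⟨v, h⟩
  map_add' x y := by funext v; by_cases h : v = i <;> simp [h]
  map_smul' c x := by funext v; by_cases h : v = i <;> simp [h]

@[simp]
lemma extendByZero_apply_self (i : V) (x : {j : V // j ≠ i} → ℝ) : extendByZero i x i = 0 := by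
  simp [extendByZero]

lemma extendByZero_apply_of_ne (i : V) (x : {j : V // j ≠ i} → ℝ) {v : V} (hv : v ≠ i) :
    extendByZero i x v = x ⟨v, hv⟩ := by
  simp [extendByZero, hv]

@[simp]
lemma extendByZero_apply_val (i : V) (x : {j : V // j ≠ i} → ℝ) (v : {j : V // j ≠ i}) :
    extendByZero i x v = x v :=
  extendByZero_apply_of_ne i x v.2

lemma extendByZero_injective (i : V) : Function.Injective (extendByZero i) :=
  fun x y h => funext fun v => by simpa using congrFun h v

lemma mulVec_extendByZero_apply (M : Matrix V V ℝ) (i : V) (x : {j : V // j ≠ i} → ℝ)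
    (v : {j : V // j ≠ i}) : (M *ᵥ extendByZero i x) v = (delRC M i *ᵥ x) v := by
  simp [mulVec, dotProduct, Fintype.sum_eq_add_sum_subtype_ne _ i, delRC]

noncomputable def paddedKer (M : Matrix V V ℝ) (i : V) : Submodule ℝ (V → ℝ) :=
  (LinearMap.ker (delRC M i).mulVecLin).map (extendByZero i)

lemma mem_paddedKer_iff {M : Matrix V V ℝ} {i : V} {z : V → ℝ} :
    z ∈ paddedKer M i ↔ z i = 0 ∧ ∀ v ≠ i, (M *ᵥ z) v = 0 := by
  constructor
  · rintro ⟨x, hx, rfl⟩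
    refine ⟨extendByZero_apply_self i x, fun v hv => ?_⟩
    rw [SetLike.mem_coe, LinearMap.mem_ker, mulVecLin_apply] at hx
    simpa [hx] using mulVec_extendByZero_apply M i x ⟨v, hv⟩
  · rintro ⟨hzi, hz⟩
    have hext : extendByZero i (fun v => z v) = z := by
      funext v
      by_cases hv : v = i
      · simp [hv, hzi]
      · simp [extendByZero_apply_of_ne i _ hv]
    refine ⟨fun v => z v, ?_, hext⟩
    rw [SetLike.mem_coe, LinearMap.mem_ker, mulVecLin_apply]
    funext v
    rw [← mulVec_extendByZero_apply, hext, hz v v.2, Pi.zero_apply]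

lemma finrank_paddedKer (M : Matrix V V ℝ) (i : V) :
    Module.finrank ℝ (paddedKer M i) = nullity (delRC M i) :=
  (Submodule.equivMapOfInjective _ (extendByZero_injective i) _).finrank_eq.symm

lemma exists_mem_paddedKer_mulVec_apply_ne_zero (M : Matrix V V ℝ) (i : V)
    (h : nullity M < nullity (delRC M i)) : ∃ z ∈ paddedKer M i, (M *ᵥ z) i ≠ 0 := by
  by_contra! hcon
  have hle : paddedKer M i ≤ LinearMap.ker M.mulVecLin := fun z hz => by
    rw [LinearMap.mem_ker, mulVecLin_apply]
    funext v
    by_cases hv : v = i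
    · exact hv ▸ hcon z hz
    · exact (mem_paddedKer_iff.1 hz).2 v hv
  have := Submodule.finrank_mono hle
  rw [finrank_paddedKer] at this
  exact absurd h (not_lt.2 this)

variable {M : Matrix V V ℝ} {i : V} {z : V → ℝ}

/-- Pair `z` with `M y`: by symmetry this equals `(M z) i * y i`. -/
lemma apply_eq_zero_of_mulVec_eq_zero_off (hM : M.IsSymm) (hz : z ∈ paddedKer M i)
    (hzi : (M *ᵥ z) i ≠ 0) {y : V → ℝ} (hy : ∀ v ≠ i, (M *ᵥ y) v = 0) : y i = 0 := by
  rw [mem_paddedKer_iff] at hz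
  have hpair : z ⬝ᵥ (M *ᵥ y) = 0 := Finset.sum_eq_zero fun v _ => by
    by_cases hv : v = i
    · simp [hv, hz.1]
    · simp [hy v hv]
  have hpair' : z ⬝ᵥ (M *ᵥ y) = (M *ᵥ z) i * y i := by
    rw [dotProduct_mulVec, ← mulVec_transpose, hM.eq]
    exact Fintype.sum_eq_single i fun v hv => by simp [hz.2 v hv]
  exact (mul_eq_zero.1 (hpair' ▸ hpair)).resolve_left hzi

lemma nullity_add_one_eq_of_mem_paddedKer (hM : M.IsSymm) (hz : z ∈ paddedKer M i)
    (hzi : (M *ᵥ z) i ≠ 0) : nullity M + 1 = nullity (delRC M i) := by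
  let φ : Module.Dual ℝ (paddedKer M i) :=
    (LinearMap.proj i ∘ₗ M.mulVecLin).domRestrict (paddedKer M i)
  have hφ : φ ≠ 0 := fun h => hzi (LinearMap.congr_fun h ⟨z, hz⟩)
  have hker : (LinearMap.ker φ).map (paddedKer M i).subtype = LinearMap.ker M.mulVecLin := by
    rw [LinearMap.ker_domRestrict, Submodule.map_comap_subtype]
    ext y
    simp only [Submodule.mem_inf, LinearMap.mem_ker, LinearMap.comp_apply, mulVecLin_apply,
      LinearMap.proj_apply, mem_paddedKer_iff]
    constructor
    · rintro ⟨⟨-, hy⟩, hyi⟩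
      funext v
      by_cases hv : v = i
      · exact hv ▸ hyi
      · exact hy v hv
    · intro hy
      have hoff : ∀ v ≠ i, (M *ᵥ y) v = 0 := fun v _ => by rw [hy, Pi.zero_apply]
      exact ⟨⟨apply_eq_zero_of_mulVec_eq_zero_off hM hz hzi hoff, hoff⟩, by rw [hy, Pi.zero_apply]⟩
  have hfin : Module.finrank ℝ (LinearMap.ker φ) = nullity M := by
    rw [nullity, ← hker]
    exact (Submodule.equivMapOfInjective _ (Submodule.injective_subtype _) _).finrank_eq
  rw [← hfin, Module.Dual.finrank_ker_add_one_of_ne_zero hφ, finrank_paddedKer]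

end PaddedKernel

lemma HasSNIP.of_delRC_eq {A A' : Matrix V V ℝ} {i : V} {z : V → ℝ} (hA : HasSNIP A i)
    (hA' : A'.IsSymm) (hdel : delRC A' i = delRC A i)
    (hz : z ∈ paddedKer A' i) (hzi : (A' *ᵥ z) i ≠ 0) : HasSNIP A' i := by
  have heq : ∀ u v, u ≠ i → v ≠ i → A' u v = A u v := fun u v hu hv =>
    congrFun (congrFun hdel ⟨u, hu⟩) ⟨v, hv⟩
  intro X hX hHad hdiag hrows
  have hrow : ∀ v, X i v = 0 := fun v =>
    apply_eq_zero_of_mulVec_eq_zero_off (y := fun u => X u v) hA' hz hzi fun u hu => hrows u v hu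
  have hcol : ∀ u, X u i = 0 := fun u => by rw [hX.apply i u, hrow]
  refine hA X hX (fun u v => ?_) hdiag (fun u v hu => ?_)
  · by_cases hu : u = i
    · simp [hu, hrow]
    by_cases hv : v = i
    · simp [hv, hcol]
    rw [← heq u v hu hv]
    exact hHad u v
  · rw [← hrows u v hu, mul_apply, mul_apply]
    refine Finset.sum_congr rfl fun w _ => ?_
    by_cases hw : w = i
    · simp [hw, hrow]
    · rw [heq u w hu hw]

section Restriction

variable {G H : SimpleGraph V} {A : Matrix V V ℝ}

noncomputable def restrictToGraph (A : Matrix V V ℝ) (H : SimpleGraph V) : Matrix V V ℝ :=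
  open Classical in fun u v => if u = v ∨ H.Adj u v then A u v else 0

lemma restrictToGraph_apply_of_not_adj {u v : V} (huv : u ≠ v) (h : ¬H.Adj u v) :
    restrictToGraph A H u v = 0 := by
  simp [restrictToGraph, huv, h]

lemma restrictToGraph_apply_of_adj_iff (hA : InS G A) {u v : V} (h : H.Adj u v ↔ G.Adj u v) :
    restrictToGraph A H u v = A u v := by
  by_cases huv : u = v
  · simp [restrictToGraph, huv]
  by_cases hH : H.Adj u v
  · simp [restrictToGraph, hH]
  have hA0 : A u v = 0 := not_not.1 fun hne => hH (h.2 ((hA.2 u v huv).1 hne))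
  simp [restrictToGraph, huv, hH, hA0]

lemma inS_restrictToGraph (hA : InS G A) (hHG : H ≤ G) : InS H (restrictToGraph A H) := by
  refine ⟨?_, fun u v huv => ?_⟩
  · classical
    ext u v
    have hsymm : A v u = A u v := hA.1.apply u v
    simp only [transpose_apply, restrictToGraph, hsymm]
    exact if_congr (or_congr eq_comm (H.adj_comm v u)) rfl rfl
  · simp only [restrictToGraph, huv, false_or]
    by_cases hH : H.Adj u v
    · simpa [hH] using (hA.2 u v huv).2 (hHG hH)
    · simp [hH, huv]

end Restriction

section Prune

variable {G : SimpleGraph V} {i j : V}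

lemma pruneAt_adj_iff {u v : V} :
    (pruneAt G i j).Adj u v ↔ G.Adj u v ∧ (u = i → v = j) ∧ (v = i → u = j) :=
  Iff.rfl

lemma pruneAt_le : pruneAt G i j ≤ G := fun _ _ h => h.1

lemma pruneAt_lt {j' : V} (hadj : G.Adj i j') (hj' : j' ≠ j) : pruneAt G i j < G :=
  lt_of_le_of_ne pruneAt_le fun h => hj' ((show (pruneAt G i j).Adj i j' by rwa [h]).2.1 rfl)

variable {A : Matrix V V ℝ}

lemma delRC_restrictToGraph_pruneAt (hA : InS G A) :
    delRC (restrictToGraph A (pruneAt G i j)) i = delRC A i := by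
  ext u v
  exact restrictToGraph_apply_of_adj_iff hA (by simp [pruneAt_adj_iff, u.2, v.2])

lemma mulVec_restrictToGraph_pruneAt_apply_self (hA : InS G A) {z : V → ℝ} (hzi : z i = 0) :
    (restrictToGraph A (pruneAt G i j) *ᵥ z) i = A i j * z j := by
  have hij : restrictToGraph A (pruneAt G i j) i j = A i j :=
    restrictToGraph_apply_of_adj_iff hA
      ⟨fun h => h.1, fun h => ⟨h, fun _ => rfl, fun h' => h'.symm⟩⟩
  rw [← hij]
  refine Fintype.sum_eq_single j fun v hvj => ?_
  by_cases hvi : v = i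
  · simp [hvi, hzi]
  · exact mul_eq_zero_of_left
      (restrictToGraph_apply_of_not_adj (Ne.symm hvi) (by simp [pruneAt_adj_iff, hvj])) _

end Prune

theorem stmt19_general (G : SimpleGraph V) (i : V) (k : ℕ)
    (A : Matrix V V ℝ) (hA : InS G A) (hsnip : HasSNIP A i)
    (h1 : nullity A = k) (h2 : nullity (delRC A i) = k + 1) :
    (∃ j : V, G.Adj i j ∧ ∃ A' : Matrix V V ℝ, InS (pruneAt G i j) A' ∧
      HasSNIP A' i ∧ nullity A' = k ∧ nullity (delRC A' i) = k + 1) ∧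
    ((¬ ∃! j : V, G.Adj i j) →
      ∃ G' : SimpleGraph V, G' < G ∧ ∃ A' : Matrix V V ℝ, InS G' A' ∧
        HasSNIP A' i ∧ nullity A' = k ∧ nullity (delRC A' i) = k + 1) := by
  obtain ⟨z, hz, hAz⟩ := exists_mem_paddedKer_mulVec_apply_ne_zero A i (by omega)
  obtain ⟨j, -, hj⟩ := Finset.exists_ne_zero_of_sum_ne_zero hAz
  have hzi : z i = 0 := (mem_paddedKer_iff.1 hz).1
  have hji : j ≠ i := fun h => right_ne_zero_of_mul hj (h ▸ hzi)
  have hadj : G.Adj i j := (hA.2 i j hji.symm).1 (left_ne_zero_of_mul hj)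
  set A' := restrictToGraph A (pruneAt G i j)
  have hdel : delRC A' i = delRC A i := delRC_restrictToGraph_pruneAt hA
  have hz' : z ∈ paddedKer A' i := by rwa [paddedKer, hdel]
  have hA'z : (A' *ᵥ z) i ≠ 0 := by rwa [mulVec_restrictToGraph_pruneAt_apply_self hA hzi]
  have hInS : InS (pruneAt G i j) A' := inS_restrictToGraph hA pruneAt_le
  have hsnip' : HasSNIP A' i := hsnip.of_delRC_eq hInS.1 hdel hz' hA'z
  have hA' : nullity A' = k ∧ nullity (delRC A' i) = k + 1 := by
    have hnull := nullity_add_one_eq_of_mem_paddedKer hInS.1 hz' hA'z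
    rw [hdel, h2] at hnull ⊢
    exact ⟨by omega, rfl⟩
  refine ⟨⟨j, hadj, A', hInS, hsnip', hA'⟩, fun hne => ⟨pruneAt G i j, ?_, A', hInS, hsnip', hA'⟩⟩
  obtain ⟨j', hadj', hj'⟩ : ∃ j', G.Adj i j' ∧ j' ≠ j := by
    by_contra! h
    exact hne ⟨j, hadj, h⟩
  exact pruneAt_lt hadj' hj'

theorem stmt19 (G : SimpleGraph V) (i : V) (k : ℕ) (hcard : 2 ≤ Fintype.card V)
    (A : Matrix V V ℝ) (hA : InS G A) (hsnip : HasSNIP A i)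
    (h1 : nullity A = k) (h2 : nullity (delRC A i) = k + 1) :
    (∃ j : V, G.Adj i j ∧ ∃ A' : Matrix V V ℝ, InS (pruneAt G i j) A' ∧
      HasSNIP A' i ∧ nullity A' = k ∧ nullity (delRC A' i) = k + 1) ∧
    ((¬ ∃! j : V, G.Adj i j) →
      ∃ G' : SimpleGraph V, G' < G ∧ ∃ A' : Matrix V V ℝ, InS G' A' ∧
        HasSNIP A' i ∧ nullity A' = k ∧ nullity (delRC A' i) = k + 1) :=
  stmt19_general G i k A hA hsnip h1 h2
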